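/- arXiv:0810.4544 — 3 statements merged into one kernel-verified Lean document; each statement's English description precedes it below -/
import Mathlib

section
/- Let A be an alternative ring. Then any subring of A generated by two elements is associative (Artin's theorem). -/
/-! Every element of the subring generated by `a` and `b` is a sum of monomials, the images of
the free magma on two letters, so by trilinearity it suffices that associators of monomials
vanish. This goes by induction on the total degree. The cocycle identity of the associator
reduces to associators `(c, u, v)` with a letter `c` in the first slot. Once shorter associators
vanish, every monomial ends, after rebracketing, with a letter. If `u` or `v` ends with `c`, the
Moufang identity `(x, y x, z) = x (x, y, z)` kills `(c, u, v)`; otherwise both end with the other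
letter `e`, and the linearized Moufang identity replaces `c` by `e` in the first slot. -/

structure IsAlternative (A : Type*) [NonUnitalNonAssocRing A] : Prop where
  associator_self_left : ∀ x y : A, associator x x y = 0
  associator_self_right : ∀ x y : A, associator y x x = 0

namespace IsAlternative

variable {A : Type*} [NonUnitalNonAssocRing A]

theorem associator_swap_left (hA : IsAlternative A) (x y z : A) :
    associator y x z = -associator x y z := by
  have h := hA.associator_self_left (x + y) z
  simp only [← AddMonoidHom.associator_apply, map_add, AddMonoidHom.add_apply] at h
  simp only [AddMonoidHom.associator_apply, hA.associator_self_left] at h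
  linear_combination (norm := abel) h

theorem associator_swap_right (hA : IsAlternative A) (x y z : A) :
    associator x z y = -associator x y z := by
  have h := hA.associator_self_right (y + z) x
  simp only [← AddMonoidHom.associator_apply, map_add, AddMonoidHom.add_apply] at h
  simp only [AddMonoidHom.associator_apply, hA.associator_self_right] at h
  linear_combination (norm := abel) h

theorem associator_flexible (hA : IsAlternative A) (x y : A) : associator x y x = 0 := by
  rw [hA.associator_swap_right, hA.associator_self_left, neg_zero]

theorem associator_rotate (hA : IsAlternative A) (x y z : A) :
    associator x y z = associator y z x := by
  rw [hA.associator_swap_right y, hA.associator_swap_left]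

theorem associator_self_mul (hA : IsAlternative A) (x y z : A) :
    associator x (x * y) z = associator (x * x) y z - x * associator x y z := by
  have h := associator_cocycle x x y z
  rw [hA.associator_self_left, hA.associator_self_left, zero_mul] at h
  linear_combination (norm := abel) h

theorem associator_mul_self (hA : IsAlternative A) (x y z : A) :
    associator x (y * x) z = x * associator x y z := by
  have h := associator_cocycle x y x z
  rw [hA.associator_flexible, zero_mul] at h
  linear_combination (norm := (simp only [mul_neg]; abel)) h
    + hA.associator_swap_left x (x * y) z + hA.associator_swap_right x (x * z) y
    - hA.associator_self_mul x y z - hA.associator_self_mul x z y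
    - hA.associator_swap_right (x * x) y z - x * hA.associator_swap_left x y z
    + x * hA.associator_swap_right x y z

theorem associator_mul_add_associator_mul (hA : IsAlternative A) (x y w z : A) :
    associator x (y * w) z + associator w (y * x) z =
      x * associator w y z + w * associator x y z := by
  have h := hA.associator_mul_self (x + w) y z
  simp only [← AddMonoidHom.associator_apply, map_add, AddMonoidHom.add_apply, mul_add,
    add_mul] at h
  simp only [AddMonoidHom.associator_apply, hA.associator_mul_self] at h
  linear_combination (norm := abel) h

end IsAlternative

section Monomials

open FreeMagma

variable {A : Type*} [NonUnitalNonAssocRing A] {α : Type*}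

def AssociatorVanishesBelow (f : α → A) (n : ℕ) : Prop :=
  ∀ p q r : FreeMagma α, p.length + q.length + r.length < n →
    associator (lift f p) (lift f q) (lift f r) = 0

variable {f : α → A}

theorem AssociatorVanishesBelow.mono {m n : ℕ} (h : AssociatorVanishesBelow f n) (hmn : m ≤ n) :
    AssociatorVanishesBelow f m :=
  fun p q r hpqr => h p q r (hpqr.trans_le hmn)

variable (f) in
def EndsWith (g : α) (w : FreeMagma α) : Prop :=
  lift f w = f g ∨ ∃ w' : FreeMagma α, w'.length < w.length ∧ lift f w = lift f w' * f g

theorem exists_endsWith (w : FreeMagma α) (h : AssociatorVanishesBelow f (w.length + 1)) :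
    ∃ g, EndsWith f g w := by
  induction w with
  | ih1 g => exact ⟨g, Or.inl rfl⟩
  | ih2 x y _ ihy =>
    have hx := x.length_pos
    obtain ⟨g, hy | ⟨y', hy', hy⟩⟩ := ihy (h.mono (by simp only [length]; omega))
    · exact ⟨g, Or.inr ⟨x, by simp [y.length_pos], by simp [hy]⟩⟩
    · refine ⟨g, Or.inr ⟨x * y', by simp only [length]; omega, ?_⟩⟩
      have hassoc := h x y' (of g) (by simp only [length]; omega)
      rw [lift_of, associator_apply, sub_eq_zero] at hassoc
      rw [map_mul, hy, map_mul, hassoc]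

theorem IsAlternative.associator_eq_zero_of_endsWith (hA : IsAlternative A) {g : α}
    {u v : FreeMagma α} (h : AssociatorVanishesBelow f (u.length + v.length + 1))
    (hu : EndsWith f g u) :
    associator (f g) (lift f u) (lift f v) = 0 := by
  rcases hu with hu | ⟨u', hu', hu⟩
  · rw [hu, hA.associator_self_left]
  · have hassoc := h (of g) u' v (by simp only [length]; omega)
    rw [lift_of] at hassoc
    rw [hu, hA.associator_mul_self, hassoc, mul_zero]

theorem IsAlternative.associator_eq_zero_of_endsWith_of_endsWith (hA : IsAlternative A)
    (c : α) {e : α} {u v : FreeMagma α} (h : AssociatorVanishesBelow f (u.length + v.length + 1))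
    (hu : EndsWith f e u) (hv : EndsWith f e v) :
    associator (f c) (lift f u) (lift f v) = 0 := by
  rcases hu with hu | ⟨u', hu', hu⟩
  · have hvc := hA.associator_eq_zero_of_endsWith (v := of c) (h.mono (by simp [u.length_pos])) hv
    rw [lift_of] at hvc
    rw [hu, hA.associator_rotate, hvc]
  · have hcross := hA.associator_eq_zero_of_endsWith (v := u' * of c)
      (h.mono (by simp only [length]; omega)) hv
    rw [map_mul, lift_of, hA.associator_swap_right, neg_eq_zero] at hcross
    have hc := h (of c) u' v (by simp only [length]; omega)
    have he := h (of e) u' v (by simp only [length]; omega)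
    rw [lift_of] at hc he
    have key := hA.associator_mul_add_associator_mul (f c) (lift f u') (f e) (lift f v)
    rwa [← hu, hcross, add_zero, hc, he, mul_zero, mul_zero, add_zero] at key

theorem IsAlternative.associator_letter_left_eq_zero (hA : IsAlternative A) {f : Bool → A}
    (c : Bool) (u v : FreeMagma Bool) (h : AssociatorVanishesBelow f (u.length + v.length + 1)) :
    associator (f c) (lift f u) (lift f v) = 0 := by
  obtain ⟨g, hg⟩ := exists_endsWith u (h.mono (by omega))
  obtain ⟨g', hg'⟩ := exists_endsWith v (h.mono (by omega))
  by_cases hgc : g = c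
  · exact hA.associator_eq_zero_of_endsWith h (hgc ▸ hg)
  by_cases hg'c : g' = c
  · rw [hA.associator_swap_right,
      hA.associator_eq_zero_of_endsWith (by rwa [add_comm v.length]) (hg'c ▸ hg'), neg_zero]
  have hgg' : g = g' := (Bool.eq_not_iff.2 hgc).trans (Bool.eq_not_iff.2 hg'c).symm
  exact hA.associator_eq_zero_of_endsWith_of_endsWith c h (hgg' ▸ hg) hg'

theorem IsAlternative.associator_lift_eq_zero_of_vanishesBelow (hA : IsAlternative A)
    {f : Bool → A} (p q r : FreeMagma Bool)
    (h : AssociatorVanishesBelow f (p.length + q.length + r.length)) :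
    associator (lift f p) (lift f q) (lift f r) = 0 := by
  induction p generalizing q r with
  | ih1 c =>
    simpa using hA.associator_letter_left_eq_zero c q r (h.mono (by simp only [length]; omega))
  | ih2 p₁ p₂ ih₁ _ =>
    have hp₁ := p₁.length_pos
    have hr := r.length_pos
    have h₁ := ih₁ (p₂ * q) r (h.mono (by simp only [length]; omega))
    have h₂ := ih₁ p₂ (q * r) (h.mono (by simp only [length]; omega))
    have h₃ := h p₂ q r (by simp only [length]; omega)
    have h₄ := h p₁ p₂ q (by simp only [length]; omega)
    have hcocycle := associator_cocycle (lift f p₁) (lift f p₂) (lift f q) (lift f r)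
    rw [map_mul] at h₁ h₂ ⊢
    rw [h₁, h₂, h₃, h₄, mul_zero, zero_mul] at hcocycle
    linear_combination (norm := abel) -hcocycle

theorem IsAlternative.associator_lift_eq_zero (hA : IsAlternative A) (f : Bool → A)
    (p q r : FreeMagma Bool) : associator (lift f p) (lift f q) (lift f r) = 0 := by
  suffices ∀ n, AssociatorVanishesBelow f n from this _ p q r (Nat.lt_succ_self _)
  intro n
  induction n with
  | zero => exact fun p q r h => absurd h (Nat.not_lt_zero _)
  | succ n ih =>
    intro p q r h
    rcases Nat.lt_succ_iff_lt_or_eq.1 h with h | h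
    · exact ih p q r h
    · exact hA.associator_lift_eq_zero_of_vanishesBelow p q r (h ▸ ih)

end Monomials

theorem AddMonoidHom.apply₃_eq_zero_of_mem_closure {G H K L : Type*} [AddCommGroup G]
    [AddCommGroup H] [AddCommGroup K] [AddCommGroup L] (F : G →+ H →+ K →+ L)
    {s : Set G} {t : Set H} {u : Set K} (h : ∀ x ∈ s, ∀ y ∈ t, ∀ z ∈ u, F x y z = 0)
    {x : G} {y : H} {z : K} (hx : x ∈ AddSubgroup.closure s) (hy : y ∈ AddSubgroup.closure t)
    (hz : z ∈ AddSubgroup.closure u) : F x y z = 0 := by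
  induction hx using AddSubgroup.closure_induction generalizing y z with
  | mem x hx =>
    induction hy using AddSubgroup.closure_induction generalizing z with
    | mem y hy =>
      induction hz using AddSubgroup.closure_induction with
      | mem z hz => exact h x hx y hy z hz
      | zero => simp
      | add _ _ _ _ h₁ h₂ => simp [h₁, h₂]
      | neg _ _ h₁ => simp [h₁]
    | zero => simp
    | add _ _ _ _ h₁ h₂ => simp [h₁ hz, h₂ hz]
    | neg _ _ h₁ => simp [h₁ hz]
  | zero => simp
  | add _ _ _ _ h₁ h₂ => simp [h₁ hy hz, h₂ hy hz]
  | neg _ _ h₁ => simp [h₁ hy hz]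

theorem IsAlternative.associator_eq_zero_of_mem_closure_pair {A : Type*}
    [NonUnitalNonAssocRing A] (hA : IsAlternative A) {a b x y z : A}
    (hx : x ∈ NonUnitalSubring.closure {a, b}) (hy : y ∈ NonUnitalSubring.closure {a, b})
    (hz : z ∈ NonUnitalSubring.closure {a, b}) : associator x y z = 0 := by
  set f : Bool → A := fun i => cond i a b
  have hmonomials : (Subsemigroup.closure {a, b} : Set A) ⊆ Set.range (FreeMagma.lift f) := by
    rw [← MulHom.coe_srange, SetLike.coe_subset_coe, Subsemigroup.closure_le]
    rintro _ (rfl | rfl)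
    exacts [⟨FreeMagma.of true, rfl⟩, ⟨FreeMagma.of false, rfl⟩]
  have hsub : ∀ {w}, w ∈ NonUnitalSubring.closure {a, b} →
      w ∈ AddSubgroup.closure (Set.range (FreeMagma.lift f)) := fun hw =>
    AddSubgroup.closure_mono hmonomials (NonUnitalSubring.mem_closure_iff.1 hw)
  refine AddMonoidHom.associator.apply₃_eq_zero_of_mem_closure ?_ (hsub hx) (hsub hy) (hsub hz)
  rintro _ ⟨p, rfl⟩ _ ⟨q, rfl⟩ _ ⟨r, rfl⟩
  exact hA.associator_lift_eq_zero f p q r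

/-- Artin's theorem: in an alternative ring, the subring generated by any two
elements is associative. -/
theorem stmt_9 {A : Type*} [NonUnitalNonAssocRing A]
    (alt₁ : ∀ x y : A, (x * x) * y = x * (x * y))
    (alt₂ : ∀ x y : A, (y * x) * x = y * (x * x))
    (a b : A) (S : Set A)
    (hS : S = ⋂₀ {T : Set A | a ∈ T ∧ b ∈ T ∧
        (∀ u ∈ T, ∀ v ∈ T, u * v ∈ T) ∧
        (∀ u ∈ T, ∀ v ∈ T, u + v ∈ T) ∧
        (∀ u ∈ T, -u ∈ T)}) :
    ∀ x ∈ S, ∀ y ∈ S, ∀ z ∈ S, (x * y) * z = x * (y * z) := by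
  have hA : IsAlternative A :=
    ⟨fun x y => sub_eq_zero.2 (alt₁ x y), fun x y => sub_eq_zero.2 (alt₂ x y)⟩
  have hS_le : S ⊆ NonUnitalSubring.closure {a, b} := by
    rw [hS]
    exact Set.sInter_subset_of_mem ⟨NonUnitalSubring.subset_closure (by simp),
      NonUnitalSubring.subset_closure (by simp), fun _ hu _ hv => mul_mem hu hv,
      fun _ hu _ hv => add_mem hu hv, fun _ hu => neg_mem hu⟩
  intro x hx y hy z hz
  exact sub_eq_zero.1 (hA.associator_eq_zero_of_mem_closure_pair (hS_le hx) (hS_le hy) (hS_le hz))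
end

section
/- Let L = M(G, *, g₀) = G ∪ Gu be the Moufang loop obtained from a nonabelian group G by the duplication process, with multiplication g(hu) = (hg)u, (gu)h = (gh*)u, (gu)(hu) = g₀h*g, where * is an involution of G with g₀* = g₀, g₀ ∈ Z(G), and gg* ∈ Z(G) for all g. Then L satisfies the left Moufang identity ((xy)x)z = x(y(xz)). -/
/-- The multiplication of the loop L = M(G, *, g₀) = G ∪ Gu, obtained from a group G
by the duplication process: elements are pairs (g, false) = g and (g, true) = gu. -/
def dupMul {G : Type*} [Group G] (star : G → G) (g₀ : G) :
    G × Bool → G × Bool → G × Bool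
  | (g, false), (h, false) => (g * h, false)
  | (g, false), (h, true) => (h * g, true)
  | (g, true), (h, false) => (g * star h, true)
  | (g, true), (h, true) => (g₀ * star h * g, false)

/-! Each of the eight cases of the identity, according to whether x, y, z lie in G or in Gu,
reduces after unfolding to a word identity in G that holds once the central elements g₀ and
a a* (= a* a) are moved into place. -/

section DupMul

variable {G : Type*} [Group G] {star : G → G} {g₀ : G}

theorem star_mul_self_eq_mul_star (hnorm : ∀ g : G, g * star g ∈ Subgroup.center G) (a : G) :
    star a * a = a * star a :=
  mul_left_cancel <| by rw [← mul_assoc]; exact (Subgroup.mem_center_iff.mp (hnorm a) a).symm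

theorem dupMul_left_moufang_mk_false (hanti : ∀ a b : G, star (a * b) = star b * star a)
    (hg₀c : g₀ ∈ Subgroup.center G)
    (hnorm : ∀ g : G, g * star g ∈ Subgroup.center G) (a : G) (y z : G × Bool) :
    dupMul star g₀ (dupMul star g₀ (dupMul star g₀ (a, false) y) (a, false)) z =
      dupMul star g₀ (a, false) (dupMul star g₀ y (dupMul star g₀ (a, false) z)) := by
  have hN := Subgroup.mem_center_iff.mp (hnorm a)
  have hg := Subgroup.mem_center_iff.mp hg₀c
  rcases y with ⟨b, _ | _⟩ <;> rcases z with ⟨c, _ | _⟩ <;>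
    simp only [dupMul, hanti, Prod.mk.injEq, and_true, mul_assoc]
  · rw [star_mul_self_eq_mul_star hnorm, ← mul_assoc a, ← hN]
  · calc g₀ * (star c * (b * (a * star a))) = g₀ * (a * star a * (star c * b)) := by
          rw [← hN]; simp only [mul_assoc]
      _ = a * (g₀ * (star a * (star c * b))) := by
          rw [← mul_assoc a g₀, hg a]; simp only [mul_assoc]

theorem dupMul_left_moufang_mk_true (hanti : ∀ a b : G, star (a * b) = star b * star a)
    (hinvol : ∀ a : G, star (star a) = a) (hg₀ : star g₀ = g₀) (hg₀c : g₀ ∈ Subgroup.center G)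
    (hnorm : ∀ g : G, g * star g ∈ Subgroup.center G) (a : G) (y z : G × Bool) :
    dupMul star g₀ (dupMul star g₀ (dupMul star g₀ (a, true) y) (a, true)) z =
      dupMul star g₀ (a, true) (dupMul star g₀ y (dupMul star g₀ (a, true) z)) := by
  have hN := Subgroup.mem_center_iff.mp (hnorm a)
  have hg := Subgroup.mem_center_iff.mp hg₀c
  rcases y with ⟨b, _ | _⟩ <;> rcases z with ⟨c, _ | _⟩ <;>
    simp only [dupMul, hanti, hinvol, hg₀, Prod.mk.injEq, and_true, mul_assoc]
  · rw [← mul_assoc (star a), star_mul_self_eq_mul_star hnorm, ← hN]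
    simp only [mul_assoc]
  · calc c * (g₀ * (star a * (a * star b))) = c * (g₀ * (star b * (a * star a))) := by
          rw [← mul_assoc (star a), star_mul_self_eq_mul_star hnorm, ← hN]
      _ = a * (star a * (c * (g₀ * star b))) := by rw [← mul_assoc a, ← hN]; simp only [mul_assoc]
  · rw [← hg (star b * (a * star c))]
    simp only [mul_assoc]
  · rw [← hg (star b * a), ← hg (star c * (a * (star b * a)))]
    simp only [mul_assoc]

end DupMul

theorem stmt_13_general {G : Type*} [Group G] (star : G → G) (g₀ : G)
    (hanti : ∀ a b : G, star (a * b) = star b * star a)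
    (hinvol : ∀ a : G, star (star a) = a)
    (hg₀ : star g₀ = g₀)
    (hg₀c : g₀ ∈ Subgroup.center G)
    (hnorm : ∀ g : G, g * star g ∈ Subgroup.center G) :
    ∀ x y z : G × Bool,
      dupMul star g₀ (dupMul star g₀ (dupMul star g₀ x y) x) z =
        dupMul star g₀ x (dupMul star g₀ y (dupMul star g₀ x z)) := by
  rintro ⟨a, _ | _⟩ y z
  · exact dupMul_left_moufang_mk_false hanti hg₀c hnorm a y z
  · exact dupMul_left_moufang_mk_true hanti hinvol hg₀ hg₀c hnorm a y z

/-- The loop M(G, *, g₀) obtained by duplicating a nonabelian group G satisfies the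
left Moufang identity ((xy)x)z = x(y(xz)). -/
theorem stmt_13 {G : Type*} [Group G] (star : G → G) (g₀ : G)
    (hanti : ∀ a b : G, star (a * b) = star b * star a)
    (hinvol : ∀ a : G, star (star a) = a)
    (hg₀ : star g₀ = g₀)
    (hg₀c : g₀ ∈ Subgroup.center G)
    (hnorm : ∀ g : G, g * star g ∈ Subgroup.center G)
    (hnab : ∃ a b : G, a * b ≠ b * a) :
    ∀ x y z : G × Bool,
      dupMul star g₀ (dupMul star g₀ (dupMul star g₀ x y) x) z =
        dupMul star g₀ x (dupMul star g₀ y (dupMul star g₀ x z)) :=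
  stmt_13_general star g₀ hanti hinvol hg₀ hg₀c hnorm
end

section
/- Let R be a finite-dimensional algebra over ℚ with Jacobson radical J, and suppose every ℤ-order Γ ⊂ R has the property that U(Γ) contains no free abelian subgroup of rank 2. If θ₁, θ₂ ∈ J are ℤ-linearly independent elements of an order Γ with θ₁² = θ₂² = θ₁θ₂ = θ₂θ₁ = 0, then a contradiction arises; hence no such pair exists, i.e., the ℚ-span of {θ ∈ J ∩ Γ : θ² = 0, θ commuting with all such elements, pairwise products 0} has dimension at most 1. -/
/-! On an additive subgroup N of a ring with N · N = 0, the map x ↦ 1 + x is a group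
homomorphism into the units, since (1 + x)(1 + y) = 1 + x + y. Applied to
N = ℤθ₁ + ℤθ₂ ⊆ Γ it embeds ℤ² into U(Γ), contradicting the hypothesis on orders. -/

section SquareZero

variable {M A : Type*} [AddGroup M] [Ring A]

theorem one_add_mul_one_add_of_mul_eq_zero (φ : M →+ A) (hφ : ∀ a b, φ a * φ b = 0) (a b : M) :
    (1 + φ a) * (1 + φ b) = 1 + φ (a + b) := by
  rw [map_add, add_mul, mul_add, mul_add, hφ]
  noncomm_ring

def oneAddUnitsHom (φ : M →+ A) (hφ : ∀ a b, φ a * φ b = 0) : Multiplicative M →* Aˣ where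
  toFun a :=
    { val := 1 + φ a.toAdd
      inv := 1 + φ (-a.toAdd)
      val_inv := by rw [one_add_mul_one_add_of_mul_eq_zero φ hφ, add_neg_cancel, map_zero, add_zero]
      inv_val := by rw [one_add_mul_one_add_of_mul_eq_zero φ hφ, neg_add_cancel, map_zero, add_zero] }
  map_one' := Units.ext (by simp)
  map_mul' a b := Units.ext (one_add_mul_one_add_of_mul_eq_zero φ hφ _ _).symm

theorem oneAddUnitsHom_injective {φ : M →+ A} (hφ : ∀ a b, φ a * φ b = 0)
    (hinj : Function.Injective φ) : Function.Injective (oneAddUnitsHom φ hφ) := fun _ _ hab =>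
  Multiplicative.toAdd.injective <| hinj <| add_left_cancel (congrArg Units.val hab)

end SquareZero

theorem stmt_15_general {R : Type*} [Ring R] [Algebra ℚ R]
    (horders : ∀ Γ : Subring R,
      (AddSubgroup.toIntSubmodule Γ.toAddSubgroup).FG →
      Submodule.span ℚ (Γ : Set R) = ⊤ →
      ∀ f : Multiplicative (ℤ × ℤ) →* Γˣ, ¬ Function.Injective f) :
    ¬ ∃ (Γ : Subring R) (θ₁ θ₂ : R),
      (AddSubgroup.toIntSubmodule Γ.toAddSubgroup).FG ∧
      Submodule.span ℚ (Γ : Set R) = ⊤ ∧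
      θ₁ ∈ Γ ∧ θ₂ ∈ Γ ∧
      θ₁ ∈ (⊥ : Ideal R).jacobson ∧ θ₂ ∈ (⊥ : Ideal R).jacobson ∧
      (∀ m n : ℤ, m • θ₁ + n • θ₂ = 0 → m = 0 ∧ n = 0) ∧
      θ₁ * θ₁ = 0 ∧ θ₂ * θ₂ = 0 ∧ θ₁ * θ₂ = 0 ∧ θ₂ * θ₁ = 0 := by
  rintro ⟨Γ, θ₁, θ₂, hFG, hspan, h₁, h₂, -, -, hlin, h11, h22, h12, h21⟩
  let φ : ℤ × ℤ →+ Γ := (zmultiplesHom Γ ⟨θ₁, h₁⟩).coprod (zmultiplesHom Γ ⟨θ₂, h₂⟩)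
  have hφ_coe (p : ℤ × ℤ) : (φ p : R) = p.1 • θ₁ + p.2 • θ₂ := by simp [φ]
  have hmul (p q : ℤ × ℤ) : φ p * φ q = 0 := Subtype.ext <| by
    simp only [Subring.coe_mul, hφ_coe, add_mul, mul_add, smul_mul_assoc, mul_smul_comm,
      h11, h22, h12, h21, smul_zero, add_zero, ZeroMemClass.coe_zero]
  have hinj : Function.Injective φ := (injective_iff_map_eq_zero φ).2 fun p hp => by
    obtain ⟨hm, hn⟩ := hlin p.1 p.2 (by rw [← hφ_coe, hp, ZeroMemClass.coe_zero])
    exact Prod.ext hm hn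
  exact horders Γ hFG hspan _ (oneAddUnitsHom_injective hmul hinj)

/-- If every ℤ-order Γ in a finite-dimensional ℚ-algebra R has unit group containing
no free abelian subgroup of rank 2, then no ℤ-order contains ℤ-linearly independent
elements θ₁, θ₂ of the Jacobson radical with θ₁² = θ₂² = θ₁θ₂ = θ₂θ₁ = 0. -/
theorem stmt_15 {R : Type*} [Ring R] [Algebra ℚ R] [FiniteDimensional ℚ R]
    (horders : ∀ Γ : Subring R,
      (AddSubgroup.toIntSubmodule Γ.toAddSubgroup).FG →
      Submodule.span ℚ (Γ : Set R) = ⊤ →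
      ∀ f : Multiplicative (ℤ × ℤ) →* Γˣ, ¬ Function.Injective f) :
    ¬ ∃ (Γ : Subring R) (θ₁ θ₂ : R),
      (AddSubgroup.toIntSubmodule Γ.toAddSubgroup).FG ∧
      Submodule.span ℚ (Γ : Set R) = ⊤ ∧
      θ₁ ∈ Γ ∧ θ₂ ∈ Γ ∧
      θ₁ ∈ (⊥ : Ideal R).jacobson ∧ θ₂ ∈ (⊥ : Ideal R).jacobson ∧
      (∀ m n : ℤ, m • θ₁ + n • θ₂ = 0 → m = 0 ∧ n = 0) ∧
      θ₁ * θ₁ = 0 ∧ θ₂ * θ₂ = 0 ∧ θ₁ * θ₂ = 0 ∧ θ₂ * θ₁ = 0 :=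
  stmt_15_general horders
end
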